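/- Let F : C → D be a weight-exact functor between triangulated categories equipped with weight structures w and w'. If a morphism h in C kills weights m,…,n (with respect to w), then F(h) kills weights m,…,n (with respect to w'). Moreover, if F is additionally a full embedding, then the converse holds: if F(h) kills weights m,…,n, then h kills weights m,…,n. -/

import Mathlib

open CategoryTheory Limits Pretriangulated

structure WeightStructure (C : Type*) [Category C] [Preadditive C] [HasZeroObject C]
    [HasShift C ℤ] [∀ n : ℤ, (CategoryTheory.shiftFunctor C n).Additive] [Pretriangulated C] where
  le : Set C
  ge : Set C
  le_retract : ∀ ⦃X Y : C⦄, Y ∈ le → ∀ (i : X ⟶ Y) (r : Y ⟶ X), i ≫ r = 𝟙 X → X ∈ le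
  ge_retract : ∀ ⦃X Y : C⦄, Y ∈ ge → ∀ (i : X ⟶ Y) (r : Y ⟶ X), i ≫ r = 𝟙 X → X ∈ ge
  le_shift : ∀ ⦃X : C⦄, X ∈ le → X⟦(-1 : ℤ)⟧ ∈ le
  ge_shift : ∀ ⦃X : C⦄, X ∈ ge → X⟦(1 : ℤ)⟧ ∈ ge
  orth : ∀ ⦃X Y : C⦄, X ∈ le → Y ∈ ge → ∀ f : X ⟶ Y⟦(1 : ℤ)⟧, f = 0
  decomp : ∀ M : C, ∃ (L R : C) (f : L ⟶ M) (g : M ⟶ R) (δ : R ⟶ L⟦(1 : ℤ)⟧),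
    (Triangle.mk f g δ ∈ distTriang C) ∧ L ∈ le ∧ R⟦(-1 : ℤ)⟧ ∈ ge

namespace WeightStructure

variable {C : Type*} [Category C] [Preadditive C] [HasZeroObject C]
  [HasShift C ℤ] [∀ n : ℤ, (CategoryTheory.shiftFunctor C n).Additive] [Pretriangulated C]
  (w : WeightStructure C)

/-- The class `C_{w ≤ n} = C_{w≤0}[n]`. -/
def Le (n : ℤ) : Set C := {X | X⟦(-n)⟧ ∈ w.le}

/-- The class `C_{w ≥ n} = C_{w≥0}[n]`. -/
def Ge (n : ℤ) : Set C := {X | X⟦(-n)⟧ ∈ w.ge}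

/-- `f, g, δ` form a `k`-weight decomposition triangle of `M`. -/
def IsWeightDecomp (k : ℤ) {A M B : C} (f : A ⟶ M) (g : M ⟶ B) (δ : B ⟶ A⟦(1 : ℤ)⟧) : Prop :=
  (Triangle.mk f g δ ∈ distTriang C) ∧ A ∈ w.Le k ∧ B ∈ w.Ge (k + 1)

/-- `g : M ⟶ N` kills weights `m,…,n`. -/
def KillsWeights (m n : ℤ) {M N : C} (g : M ⟶ N) : Prop :=
  ∃ (A B A' B' : C) (a : A ⟶ M) (b : M ⟶ B) (δ : B ⟶ A⟦(1 : ℤ)⟧)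
    (a' : A' ⟶ N) (b' : N ⟶ B') (δ' : B' ⟶ A'⟦(1 : ℤ)⟧),
    w.IsWeightDecomp n a b δ ∧ w.IsWeightDecomp (m - 1) a' b' δ' ∧ a ≫ g ≫ b' = 0

/-- `M` is without weights `m,…,n`. -/
def WithoutWeights (m n : ℤ) (M : C) : Prop := w.KillsWeights m n (𝟙 M)

end WeightStructure

/-!
By orthogonality of `C_{w≤n}` and `C_{w≥n+1}` and the exactness of `Hom` along a distinguished
triangle, every morphism from an object of weights `≤ n` into `M` factors through `w_{≤n}M`, and
every morphism from `N` into an object of weights `≥ m` factors through `N → w_{≥m}N`. Hence `h`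
kills weights `m,…,n` iff `x ≫ h ≫ y = 0` for all such test morphisms `x` and `y`, whatever
decompositions were chosen. A weight-exact functor carries weight decompositions to weight
decompositions, which gives the direct implication; for the converse, `F` sends test morphisms
to test morphisms, and a faithful functor reflects the vanishing of `x ≫ h ≫ y`.
-/

namespace WeightStructure

variable {C : Type*} [Category C] [Preadditive C] [HasZeroObject C]
  [HasShift C ℤ] [∀ n : ℤ, (CategoryTheory.shiftFunctor C n).Additive] [Pretriangulated C]
  (w : WeightStructure C)

lemma mem_le_of_iso {X Y : C} (e : X ≅ Y) (hX : X ∈ w.le) : Y ∈ w.le :=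
  w.le_retract hX e.inv e.hom e.inv_hom_id

lemma mem_ge_of_iso {X Y : C} (e : X ≅ Y) (hX : X ∈ w.ge) : Y ∈ w.ge :=
  w.ge_retract hX e.inv e.hom e.inv_hom_id

lemma isWeightDecomp_of_iso {k : ℤ} {T : Triangle C} (hT : T ∈ distTriang C)
    (h₁ : T.obj₁ ∈ w.Le k) (h₃ : T.obj₃ ∈ w.Ge (k + 1)) {M : C} (e : T.obj₂ ≅ M) :
    w.IsWeightDecomp k (T.mor₁ ≫ e.hom) (e.inv ≫ T.mor₂) T.mor₃ := by
  refine ⟨isomorphic_distinguished _ hT _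
    (Triangle.isoMk _ _ (Iso.refl _) e.symm (Iso.refl _) ?_ ?_ ?_), h₁, h₃⟩
  all_goals dsimp only [Triangle.mk]; simp

lemma exists_isWeightDecomp (k : ℤ) (M : C) :
    ∃ (A B : C) (f : A ⟶ M) (g : M ⟶ B) (δ : B ⟶ A⟦(1 : ℤ)⟧), w.IsWeightDecomp k f g δ := by
  obtain ⟨L, R, f, g, δ, hT, hL, hR⟩ := w.decomp (M⟦-k⟧)
  have h₁ : L⟦k⟧ ∈ w.Le k :=
    w.mem_le_of_iso ((shiftFunctorCompIsoId C k (-k) (by ring)).app L).symm hL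
  have h₃ : R⟦k⟧ ∈ w.Ge (k + 1) :=
    w.mem_ge_of_iso ((shiftFunctorAdd' C k (-(k + 1)) (-1) (by ring)).app R) hR
  exact ⟨_, _, _, _, _, w.isWeightDecomp_of_iso (Triangle.shift_distinguished _ hT k) h₁ h₃
    ((shiftFunctorCompIsoId C (-k) k (by ring)).app M)⟩

lemma hom_eq_zero_of_mem_Le_of_mem_Ge (k : ℤ) {X Y : C} (hX : X ∈ w.Le k)
    (hY : Y ∈ w.Ge (k + 1)) (f : X ⟶ Y) : f = 0 := by
  let e : Y⟦-k⟧ ≅ (Y⟦-(k + 1)⟧)⟦(1 : ℤ)⟧ := (shiftFunctorAdd' C (-(k + 1)) 1 (-k) (by ring)).app Y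
  have hshift : f⟦-k⟧' = 0 := by
    simpa using congrArg (· ≫ e.inv) (w.orth hX hY (f⟦-k⟧' ≫ e.hom))
  exact (shiftFunctor C (-k)).map_injective (by rw [hshift, Functor.map_zero])

namespace IsWeightDecomp

variable {w} {k : ℤ} {A M B : C} {f : A ⟶ M} {g : M ⟶ B} {δ : B ⟶ A⟦(1 : ℤ)⟧}

lemma exists_lift (hd : w.IsWeightDecomp k f g δ) {X : C} (hX : X ∈ w.Le k) (x : X ⟶ M) :
    ∃ u : X ⟶ A, x = u ≫ f :=
  Triangle.coyoneda_exact₂ _ hd.1 x (w.hom_eq_zero_of_mem_Le_of_mem_Ge k hX hd.2.2 _)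

lemma exists_desc (hd : w.IsWeightDecomp k f g δ) {Y : C} (hY : Y ∈ w.Ge (k + 1)) (y : M ⟶ Y) :
    ∃ v : B ⟶ Y, y = g ≫ v :=
  Triangle.yoneda_exact₂ _ hd.1 y (w.hom_eq_zero_of_mem_Le_of_mem_Ge k hd.2.1 hY _)

end IsWeightDecomp

lemma killsWeights_iff (m n : ℤ) {M N : C} (h : M ⟶ N) :
    w.KillsWeights m n h ↔ ∀ ⦃X Y : C⦄, X ∈ w.Le n → Y ∈ w.Ge m →
      ∀ (x : X ⟶ M) (y : N ⟶ Y), x ≫ h ≫ y = 0 := by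
  constructor
  · rintro ⟨A, B, A', B', a, b, δ, a', b', δ', hd, hd', hz⟩ X Y hX hY x y
    obtain ⟨u, rfl⟩ := hd.exists_lift hX x
    obtain ⟨v, rfl⟩ := hd'.exists_desc (by rwa [sub_add_cancel]) y
    simp [reassoc_of% hz]
  · intro hzero
    obtain ⟨A, B, a, b, δ, hd⟩ := w.exists_isWeightDecomp n M
    obtain ⟨A', B', a', b', δ', hd'⟩ := w.exists_isWeightDecomp (m - 1) N
    exact ⟨A, B, A', B', a, b, δ, a', b', δ', hd, hd', hzero hd.2.1 (by simpa using hd'.2.2) a b'⟩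

end WeightStructure

section WeightExact

open WeightStructure

variable {C : Type*} [Category C] [Preadditive C] [HasZeroObject C]
  [HasShift C ℤ] [∀ n : ℤ, (CategoryTheory.shiftFunctor C n).Additive] [Pretriangulated C]
  {D : Type*} [Category D] [Preadditive D] [HasZeroObject D]
  [HasShift D ℤ] [∀ n : ℤ, (CategoryTheory.shiftFunctor D n).Additive] [Pretriangulated D]
  {w : WeightStructure C} {w' : WeightStructure D} (F : C ⥤ D) [F.CommShift ℤ]

lemma CategoryTheory.Functor.obj_mem_Le (hle : ∀ X ∈ w.le, F.obj X ∈ w'.le) {k : ℤ} {X : C}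
    (hX : X ∈ w.Le k) :
    F.obj X ∈ w'.Le k :=
  w'.mem_le_of_iso ((F.commShiftIso (-k)).app X) (hle _ hX)

lemma CategoryTheory.Functor.obj_mem_Ge (hge : ∀ X ∈ w.ge, F.obj X ∈ w'.ge) {k : ℤ} {X : C}
    (hX : X ∈ w.Ge k) :
    F.obj X ∈ w'.Ge k :=
  w'.mem_ge_of_iso ((F.commShiftIso (-k)).app X) (hge _ hX)

lemma WeightStructure.IsWeightDecomp.map [F.IsTriangulated]
    (hle : ∀ X ∈ w.le, F.obj X ∈ w'.le) (hge : ∀ X ∈ w.ge, F.obj X ∈ w'.ge)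
    {k : ℤ} {A M B : C} {f : A ⟶ M} {g : M ⟶ B} {δ : B ⟶ A⟦(1 : ℤ)⟧}
    (hd : w.IsWeightDecomp k f g δ) :
    w'.IsWeightDecomp k (F.map f) (F.map g) (F.map δ ≫ (F.commShiftIso (1 : ℤ)).hom.app A) :=
  ⟨F.map_distinguished _ hd.1, F.obj_mem_Le hle hd.2.1, F.obj_mem_Ge hge hd.2.2⟩

lemma WeightStructure.KillsWeights.map [F.IsTriangulated]
    (hle : ∀ X ∈ w.le, F.obj X ∈ w'.le) (hge : ∀ X ∈ w.ge, F.obj X ∈ w'.ge)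
    {m n : ℤ} {M N : C} {h : M ⟶ N} (hk : w.KillsWeights m n h) :
    w'.KillsWeights m n (F.map h) := by
  obtain ⟨A, B, A', B', a, b, δ, a', b', δ', hd, hd', hz⟩ := hk
  refine ⟨_, _, _, _, _, _, _, _, _, _, hd.map F hle hge, hd'.map F hle hge, ?_⟩
  simp only [← F.map_comp, hz, F.map_zero]

lemma WeightStructure.KillsWeights.of_map [F.PreservesZeroMorphisms] [F.Faithful]
    (hle : ∀ X ∈ w.le, F.obj X ∈ w'.le) (hge : ∀ X ∈ w.ge, F.obj X ∈ w'.ge)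
    {m n : ℤ} {M N : C} {h : M ⟶ N} (hk : w'.KillsWeights m n (F.map h)) :
    w.KillsWeights m n h := by
  rw [killsWeights_iff] at hk ⊢
  intro X Y hX hY x y
  apply F.map_injective
  simpa using hk (F.obj_mem_Le hle hX) (F.obj_mem_Ge hge hY) (F.map x) (F.map y)

end WeightExact

/-- weight-exact functors preserve killing of weights; full embeddings
also detect it. -/
theorem killsWeights_map_iff {C : Type*} [Category C] [Preadditive C] [HasZeroObject C]
    [HasShift C ℤ] [∀ n : ℤ, (CategoryTheory.shiftFunctor C n).Additive] [Pretriangulated C]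
    {D : Type*} [Category D] [Preadditive D] [HasZeroObject D]
    [HasShift D ℤ] [∀ n : ℤ, (CategoryTheory.shiftFunctor D n).Additive] [Pretriangulated D]
    (w : WeightStructure C) (w' : WeightStructure D)
    (F : C ⥤ D) [F.CommShift ℤ] [F.IsTriangulated]
    (hle : ∀ X ∈ w.le, F.obj X ∈ w'.le) (hge : ∀ X ∈ w.ge, F.obj X ∈ w'.ge)
    (m n : ℤ) (hmn : m ≤ n) {M N : C} (h : M ⟶ N) :
    (w.KillsWeights m n h → w'.KillsWeights m n (F.map h)) ∧
      (F.Full → F.Faithful → w'.KillsWeights m n (F.map h) → w.KillsWeights m n h) :=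
  ⟨fun hk => hk.map F hle hge, fun _ _ hk => hk.of_map F hle hge⟩
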